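/- Let R₁, R₂ : L(𝓢',𝓢) → 𝓢 be moderate. Then for every continuous linear map Φ : 𝓢' → 𝓢 the pointwise product x ↦ R₁(Φ)(x)·R₂(Φ)(x) is again a Schwartz function, and the map R : Φ ↦ R₁(Φ)·R₂(Φ) is moderate. If in addition R₁ or R₂ is negligible, then R is negligible. -/

import Mathlib

open MeasureTheory SchwartzMap Filter Topology Bornology Complex

noncomputable section

/-- The Schwartz space `𝓢(ℝⁿ, ℂ)`. -/
abbrev Sch (n : ℕ) := SchwartzMap (EuclideanSpace ℝ (Fin n)) ℂ

/-- The space `𝓢'` of tempered distributions, i.e. the continuous linear functionals on `𝓢`,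
endowed (by Mathlib's default instance) with the strong topology of uniform convergence on
bounded subsets of `𝓢`. -/
abbrev SchDual (n : ℕ) := Sch n →L[ℂ] ℂ

/-- The canonical embedding `j : 𝓢 → 𝓢'`, `j(f)(g) = ∫ f(x) g(x) dx`. -/
def jEmb {n : ℕ} (f : Sch n) : SchDual n := by
  refine SchwartzMap.mkCLMtoNormedSpace (fun g : Sch n => ∫ x, f x * g x) ?_ ?_ ?_
  · intro g h
    have hg : Integrable (fun x => f x * g x) volume :=
      g.integrable.bdd_mul f.continuous.aestronglyMeasurable
        (Eventually.of_forall fun x => f.norm_le_seminorm ℂ x)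
    have hh : Integrable (fun x => f x * h x) volume :=
      h.integrable.bdd_mul f.continuous.aestronglyMeasurable
        (Eventually.of_forall fun x => f.norm_le_seminorm ℂ x)
    simp only [SchwartzMap.add_apply, mul_add]
    exact integral_add hg hh
  · intro a g
    simp only [SchwartzMap.smul_apply, smul_eq_mul, RingHom.id_apply]
    rw [← integral_const_mul]
    congr 1; funext x; ring
  · refine ⟨{(0, 0)}, ∫ x, ‖f x‖, integral_nonneg (fun x => norm_nonneg _), fun g => ?_⟩
    refine (norm_integral_le_integral_norm _).trans ?_
    have : ∀ x, ‖f x * g x‖ ≤ ‖f x‖ * (SchwartzMap.seminorm ℂ 0 0) g := by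
      intro x
      rw [norm_mul]
      exact mul_le_mul_of_nonneg_left (g.norm_le_seminorm ℂ x) (norm_nonneg _)
    refine (integral_mono_of_nonneg (Eventually.of_forall fun x => norm_nonneg _)
      (f.integrable.norm.mul_const _) (Eventually.of_forall this)).trans ?_
    rw [integral_mul_const]
    simp [schwartzSeminormFamily]

/-- The filter describing `ε → 0` with `ε ∈ (0,1]`. -/
def zeroFilter : Filter ℝ := nhdsWithin 0 (Set.Ioc 0 1)

/-- A *test object* for `(𝓢', 𝓢)`: a net `(Φ_ε)` of continuous linear maps `𝓢' → 𝓢` such that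
(ii) `j ∘ Φ_ε → id` in `L_b(𝓢',𝓢')`, (iii) `sup_{f ∈ B} q(Φ_ε (j f) - f) = O(ε^m)` for every
`m ∈ ℕ`, every bounded `B ⊆ 𝓢` and every seminorm `q` of `𝓢`, and (iv) for every bounded
`B' ⊆ 𝓢'` and every seminorm `q` of `𝓢` there is `N` with `sup_{u ∈ B'} q(Φ_ε u) = O(ε^{-N})`.
(The strong topology of `L_b(𝓢',𝓢')`, resp. its seminorms, are spelled out via uniform
convergence on bounded sets, the seminorms of `𝓢'` being suprema over bounded subsets of `𝓢`.) -/
structure IsTestObject {n : ℕ} (Φ : ℝ → (SchDual n →L[ℂ] Sch n)) : Prop where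
  tendsto_id : ∀ B' : Set (SchDual n), IsVonNBounded ℂ B' →
    ∀ B : Set (Sch n), IsVonNBounded ℂ B → ∀ δ > (0:ℝ), ∀ᶠ ε in zeroFilter,
      ∀ u ∈ B', ∀ g ∈ B, ‖jEmb (Φ ε u) g - u g‖ < δ
  negligible_on_Sch : ∀ m : ℕ, ∀ B : Set (Sch n), IsVonNBounded ℂ B → ∀ k l : ℕ,
    ∃ C : ℝ, ∀ᶠ ε in zeroFilter, ∀ f ∈ B,
      SchwartzMap.seminorm ℂ k l (Φ ε (jEmb f) - f) ≤ C * ε ^ m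
  moderate : ∀ B' : Set (SchDual n), IsVonNBounded ℂ B' → ∀ k l : ℕ,
    ∃ N : ℕ, ∃ C : ℝ, ∀ᶠ ε in zeroFilter, ∀ u ∈ B',
      SchwartzMap.seminorm ℂ k l (Φ ε u) ≤ C / ε ^ N

/-- A *0-test object* for `(𝓢', 𝓢)`: as `IsTestObject`, but with `j ∘ Φ_ε → 0` in
`L_b(𝓢',𝓢')` in (ii') and `sup_{f ∈ B} q(Φ_ε (j f)) = O(ε^m)` in (iii'). -/
structure IsZeroTestObject {n : ℕ} (Φ : ℝ → (SchDual n →L[ℂ] Sch n)) : Prop where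
  tendsto_zero : ∀ B' : Set (SchDual n), IsVonNBounded ℂ B' →
    ∀ B : Set (Sch n), IsVonNBounded ℂ B → ∀ δ > (0:ℝ), ∀ᶠ ε in zeroFilter,
      ∀ u ∈ B', ∀ g ∈ B, ‖jEmb (Φ ε u) g‖ < δ
  negligible_on_Sch : ∀ m : ℕ, ∀ B : Set (Sch n), IsVonNBounded ℂ B → ∀ k l : ℕ,
    ∃ C : ℝ, ∀ᶠ ε in zeroFilter, ∀ f ∈ B,
      SchwartzMap.seminorm ℂ k l (Φ ε (jEmb f)) ≤ C * ε ^ m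
  moderate : ∀ B' : Set (SchDual n), IsVonNBounded ℂ B' → ∀ k l : ℕ,
    ∃ N : ℕ, ∃ C : ℝ, ∀ᶠ ε in zeroFilter, ∀ u ∈ B',
      SchwartzMap.seminorm ℂ k l (Φ ε u) ≤ C / ε ^ N

/-- An element `R` of the basic space (with discrete dependence) is *moderate* if for every
seminorm `q` of `𝓢` there is `N ∈ ℕ` such that for every test object `(Φ_ε)` one has
`q(R(Φ_ε)) = O(ε^{-N})` as `ε → 0`. -/
def Moderate {n : ℕ} (R : (SchDual n →L[ℂ] Sch n) → Sch n) : Prop :=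
  ∀ k l : ℕ, ∃ N : ℕ, ∀ Φ : ℝ → (SchDual n →L[ℂ] Sch n), IsTestObject Φ →
    ∃ C : ℝ, ∀ᶠ ε in zeroFilter, SchwartzMap.seminorm ℂ k l (R (Φ ε)) ≤ C / ε ^ N

/-- An element `R` of the basic space (with discrete dependence) is *negligible* if for every
seminorm `q` of `𝓢`, every `m ∈ ℕ` and every test object `(Φ_ε)` one has
`q(R(Φ_ε)) = O(ε^m)` as `ε → 0`. -/
def Negligible {n : ℕ} (R : (SchDual n →L[ℂ] Sch n) → Sch n) : Prop :=
  ∀ k l : ℕ, ∀ m : ℕ, ∀ Φ : ℝ → (SchDual n →L[ℂ] Sch n), IsTestObject Φ →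
    ∃ C : ℝ, ∀ᶠ ε in zeroFilter, SchwartzMap.seminorm ℂ k l (R (Φ ε)) ≤ C * ε ^ m

section Aux

variable {n : ℕ}

lemma schMul_bound (f g : Sch n) (k l : ℕ) (x : EuclideanSpace ℝ (Fin n)) :
    ‖x‖ ^ k * ‖iteratedFDeriv ℝ l (fun y => f y * g y) x‖ ≤
      2 ^ l * ((∑ i ∈ Finset.range (l + 1), SchwartzMap.seminorm ℂ k i f) *
        (∑ j ∈ Finset.range (l + 1), SchwartzMap.seminorm ℂ 0 j g)) := by
  set S₁ := ∑ i ∈ Finset.range (l + 1), SchwartzMap.seminorm ℂ k i f with hS₁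
  set S₂ := ∑ j ∈ Finset.range (l + 1), SchwartzMap.seminorm ℂ 0 j g with hS₂
  have hS₁i : ∀ i ∈ Finset.range (l + 1), SchwartzMap.seminorm ℂ k i f ≤ S₁ := fun i hi =>
    Finset.single_le_sum (fun j _ => apply_nonneg _ _) hi
  have hS₂j : ∀ j ∈ Finset.range (l + 1), SchwartzMap.seminorm ℂ 0 j g ≤ S₂ := fun j hj =>
    Finset.single_le_sum (fun j _ => apply_nonneg _ _) hj
  have hS₁0 : (0:ℝ) ≤ S₁ := Finset.sum_nonneg fun _ _ => apply_nonneg _ _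
  have hS₂0 : (0:ℝ) ≤ S₂ := Finset.sum_nonneg fun _ _ => apply_nonneg _ _
  have h := norm_iteratedFDeriv_mul_le (𝕜 := ℝ) (N := ((⊤:ℕ∞) : WithTop ℕ∞)) (f.smooth ⊤) (g.smooth ⊤) x
    (n := l) (mod_cast le_top)
  calc ‖x‖ ^ k * ‖iteratedFDeriv ℝ l (fun y => f y * g y) x‖
      ≤ ‖x‖ ^ k * ∑ i ∈ Finset.range (l + 1),
          (l.choose i : ℝ) * ‖iteratedFDeriv ℝ i f x‖ * ‖iteratedFDeriv ℝ (l - i) g x‖ :=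
        mul_le_mul_of_nonneg_left h (pow_nonneg (norm_nonneg _) _)
    _ = ∑ i ∈ Finset.range (l + 1),
          (l.choose i : ℝ) * (‖x‖ ^ k * ‖iteratedFDeriv ℝ i f x‖) *
            ‖iteratedFDeriv ℝ (l - i) g x‖ := by
        rw [Finset.mul_sum]; exact Finset.sum_congr rfl fun i _ => by ring
    _ ≤ ∑ i ∈ Finset.range (l + 1), (l.choose i : ℝ) * S₁ * S₂ := by
        refine Finset.sum_le_sum fun i hi => ?_
        have h1 : ‖x‖ ^ k * ‖iteratedFDeriv ℝ i f x‖ ≤ S₁ :=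
          (SchwartzMap.le_seminorm ℂ k i f x).trans (hS₁i i hi)
        have h2 : ‖iteratedFDeriv ℝ (l - i) g x‖ ≤ S₂ :=
          (SchwartzMap.norm_iteratedFDeriv_le_seminorm ℂ g (l - i) x).trans
            (hS₂j (l - i) (Finset.mem_range.2 (Nat.lt_succ_of_le (Nat.sub_le _ _))))
        have hc : (0:ℝ) ≤ (l.choose i : ℝ) := Nat.cast_nonneg _
        calc (l.choose i : ℝ) * (‖x‖ ^ k * ‖iteratedFDeriv ℝ i f x‖) *
              ‖iteratedFDeriv ℝ (l - i) g x‖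
            ≤ (l.choose i : ℝ) * S₁ * ‖iteratedFDeriv ℝ (l - i) g x‖ := by
              apply mul_le_mul_of_nonneg_right _ (norm_nonneg _)
              exact mul_le_mul_of_nonneg_left h1 hc
          _ ≤ (l.choose i : ℝ) * S₁ * S₂ :=
              mul_le_mul_of_nonneg_left h2 (mul_nonneg hc hS₁0)
    _ = 2 ^ l * (S₁ * S₂) := by
        rw [← Finset.sum_mul, ← Finset.sum_mul, ← Nat.cast_sum, Nat.sum_range_choose]
        push_cast; ring

/-- Pointwise product of two Schwartz functions. -/
def schMul (f g : Sch n) : Sch n where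
  toFun x := f x * g x
  smooth' := (f.smooth ⊤).mul (g.smooth ⊤)
  decay' := by
    intro k l
    refine ⟨2 ^ l * ((∑ i ∈ Finset.range (l + 1), SchwartzMap.seminorm ℂ k i f) *
      (∑ j ∈ Finset.range (l + 1), SchwartzMap.seminorm ℂ 0 j g)), fun x => ?_⟩
    exact schMul_bound f g k l x

@[simp] lemma schMul_apply (f g : Sch n) (x : EuclideanSpace ℝ (Fin n)) :
    schMul f g x = f x * g x := rfl

lemma schMul_comm (f g : Sch n) : schMul f g = schMul g f := by
  ext x; exact mul_comm _ _

lemma seminorm_schMul (f g : Sch n) (k l : ℕ) :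
    SchwartzMap.seminorm ℂ k l (schMul f g) ≤
      2 ^ l * ((∑ i ∈ Finset.range (l + 1), SchwartzMap.seminorm ℂ k i f) *
        (∑ j ∈ Finset.range (l + 1), SchwartzMap.seminorm ℂ 0 j g)) := by
  refine SchwartzMap.seminorm_le_bound ℂ k l _ ?_ fun x => schMul_bound f g k l x
  positivity

lemma eventually_mem_Ioc : ∀ᶠ ε in zeroFilter, ε ∈ Set.Ioc (0:ℝ) 1 :=
  eventually_mem_nhdsWithin

/-- Sum-of-seminorms bound for moderate maps. -/
lemma sum_mod {R : (SchDual n →L[ℂ] Sch n) → Sch n} (h : Moderate R) (k l : ℕ) :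
    ∃ M : ℕ, ∀ Φ : ℝ → (SchDual n →L[ℂ] Sch n), IsTestObject Φ → ∃ D : ℝ, 0 ≤ D ∧
      ∀ᶠ ε in zeroFilter,
        (∑ i ∈ Finset.range (l + 1), SchwartzMap.seminorm ℂ k i (R (Φ ε))) ≤ D / ε ^ M := by
  choose N hN using fun i => h k i
  refine ⟨(Finset.range (l + 1)).sup N, fun Φ hΦ => ?_⟩
  choose C hC using fun i => hN i Φ hΦ
  refine ⟨∑ i ∈ Finset.range (l + 1), |C i|, Finset.sum_nonneg fun _ _ => abs_nonneg _, ?_⟩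
  have hall : ∀ᶠ ε in zeroFilter, ∀ i ∈ Finset.range (l + 1),
      SchwartzMap.seminorm ℂ k i (R (Φ ε)) ≤ C i / ε ^ N i :=
    (Filter.eventually_all_finset _).2 fun i _ => hC i
  filter_upwards [hall, eventually_mem_Ioc] with ε hε hε01
  calc ∑ i ∈ Finset.range (l + 1), SchwartzMap.seminorm ℂ k i (R (Φ ε))
      ≤ ∑ i ∈ Finset.range (l + 1), |C i| / ε ^ ((Finset.range (l + 1)).sup N) := by
        refine Finset.sum_le_sum fun i hi => (hε i hi).trans ?_
        refine div_le_div₀ (abs_nonneg _) (le_abs_self _) (pow_pos hε01.1 _) ?_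
        exact pow_le_pow_of_le_one hε01.1.le hε01.2 (Finset.le_sup hi)
    _ = (∑ i ∈ Finset.range (l + 1), |C i|) / ε ^ ((Finset.range (l + 1)).sup N) := by
        rw [Finset.sum_div]

/-- Sum-of-seminorms bound for negligible maps. -/
lemma sum_neg {R : (SchDual n →L[ℂ] Sch n) → Sch n} (h : Negligible R) (k l m : ℕ)
    {Φ : ℝ → (SchDual n →L[ℂ] Sch n)} (hΦ : IsTestObject Φ) : ∃ D : ℝ, 0 ≤ D ∧
      ∀ᶠ ε in zeroFilter,
        (∑ i ∈ Finset.range (l + 1), SchwartzMap.seminorm ℂ k i (R (Φ ε))) ≤ D * ε ^ m := by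
  choose C hC using fun i => h k i m Φ hΦ
  refine ⟨∑ i ∈ Finset.range (l + 1), |C i|, Finset.sum_nonneg fun _ _ => abs_nonneg _, ?_⟩
  have hall : ∀ᶠ ε in zeroFilter, ∀ i ∈ Finset.range (l + 1),
      SchwartzMap.seminorm ℂ k i (R (Φ ε)) ≤ C i * ε ^ m :=
    (Filter.eventually_all_finset _).2 fun i _ => hC i
  filter_upwards [hall, eventually_mem_Ioc] with ε hε hε01
  calc ∑ i ∈ Finset.range (l + 1), SchwartzMap.seminorm ℂ k i (R (Φ ε))
      ≤ ∑ i ∈ Finset.range (l + 1), |C i| * ε ^ m :=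
        Finset.sum_le_sum fun i hi => (hε i hi).trans
          (mul_le_mul_of_nonneg_right (le_abs_self _) (pow_nonneg hε01.1.le _))
    _ = (∑ i ∈ Finset.range (l + 1), |C i|) * ε ^ m := by rw [Finset.sum_mul]

lemma schwartz_mod_mul {R₁ R₂ : (SchDual n →L[ℂ] Sch n) → Sch n}
    (h₁ : Moderate R₁) (h₂ : Moderate R₂) :
    Moderate (fun Φ => schMul (R₁ Φ) (R₂ Φ)) := by
  intro k l
  obtain ⟨M₁, hM₁⟩ := sum_mod h₁ k l
  obtain ⟨M₂, hM₂⟩ := sum_mod (n := n) h₂ 0 l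
  refine ⟨M₁ + M₂, fun Φ hΦ => ?_⟩
  obtain ⟨D₁, hD₁0, hD₁⟩ := hM₁ Φ hΦ
  obtain ⟨D₂, hD₂0, hD₂⟩ := hM₂ Φ hΦ
  refine ⟨2 ^ l * (D₁ * D₂), ?_⟩
  filter_upwards [hD₁, hD₂, eventually_mem_Ioc] with ε h1 h2 hε01
  have hε := hε01.1
  calc SchwartzMap.seminorm ℂ k l (schMul (R₁ (Φ ε)) (R₂ (Φ ε)))
      ≤ 2 ^ l * ((∑ i ∈ Finset.range (l + 1), SchwartzMap.seminorm ℂ k i (R₁ (Φ ε))) *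
          (∑ j ∈ Finset.range (l + 1), SchwartzMap.seminorm ℂ 0 j (R₂ (Φ ε)))) :=
        seminorm_schMul _ _ k l
    _ ≤ 2 ^ l * ((D₁ / ε ^ M₁) * (D₂ / ε ^ M₂)) := by
        refine mul_le_mul_of_nonneg_left ?_ (by positivity)
        exact mul_le_mul h1 h2 (Finset.sum_nonneg fun _ _ => apply_nonneg _ _)
          (div_nonneg hD₁0 (pow_nonneg hε.le _))
    _ = 2 ^ l * (D₁ * D₂) / ε ^ (M₁ + M₂) := by
        rw [div_mul_div_comm, ← pow_add]; ring
  
lemma schwartz_neg_mul {R₁ R₂ : (SchDual n →L[ℂ] Sch n) → Sch n}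
    (h₁ : Negligible R₁) (h₂ : Moderate R₂) :
    Negligible (fun Φ => schMul (R₁ Φ) (R₂ Φ)) := by
  intro k l m Φ hΦ
  obtain ⟨M₂, hM₂⟩ := sum_mod (n := n) h₂ 0 l
  obtain ⟨D₂, hD₂0, hD₂⟩ := hM₂ Φ hΦ
  obtain ⟨D₁, hD₁0, hD₁⟩ := sum_neg h₁ k l (m + M₂) hΦ
  refine ⟨2 ^ l * (D₁ * D₂), ?_⟩
  filter_upwards [hD₁, hD₂, eventually_mem_Ioc] with ε h1 h2 hε01
  have hε := hε01.1
  calc SchwartzMap.seminorm ℂ k l (schMul (R₁ (Φ ε)) (R₂ (Φ ε)))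
      ≤ 2 ^ l * ((∑ i ∈ Finset.range (l + 1), SchwartzMap.seminorm ℂ k i (R₁ (Φ ε))) *
          (∑ j ∈ Finset.range (l + 1), SchwartzMap.seminorm ℂ 0 j (R₂ (Φ ε)))) :=
        seminorm_schMul _ _ k l
    _ ≤ 2 ^ l * ((D₁ * ε ^ (m + M₂)) * (D₂ / ε ^ M₂)) := by
        refine mul_le_mul_of_nonneg_left ?_ (by positivity)
        exact mul_le_mul h1 h2 (Finset.sum_nonneg fun _ _ => apply_nonneg _ _)
          (mul_nonneg hD₁0 (pow_nonneg hε.le _))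
    _ = 2 ^ l * (D₁ * D₂) * ε ^ m := by
        rw [pow_add]
        field_simp

end Aux

/-- Let `R₁, R₂ : L(𝓢',𝓢) → 𝓢` be moderate. Then for every continuous linear `Φ : 𝓢' → 𝓢`
the pointwise product `x ↦ R₁(Φ)(x) · R₂(Φ)(x)` is again a Schwartz function, and the map
`R : Φ ↦ R₁(Φ) · R₂(Φ)` is moderate; if in addition `R₁` or `R₂` is negligible, then `R` is
negligible. -/
theorem pointwise_product_moderate (n : ℕ) (hn : 0 < n)
    (R₁ R₂ : (SchDual n →L[ℂ] Sch n) → Sch n)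
    (h₁ : Moderate R₁) (h₂ : Moderate R₂) :
    ∃ R : (SchDual n →L[ℂ] Sch n) → Sch n,
      (∀ (Φ : SchDual n →L[ℂ] Sch n) (x : EuclideanSpace ℝ (Fin n)),
        R Φ x = R₁ Φ x * R₂ Φ x) ∧
      Moderate R ∧
      ((Negligible R₁ ∨ Negligible R₂) → Negligible R) := by
  refine ⟨fun Φ => schMul (R₁ Φ) (R₂ Φ), fun Φ x => rfl, schwartz_mod_mul h₁ h₂, ?_⟩
  rintro (hneg | hneg)
  · exact schwartz_neg_mul hneg h₂
  · have := schwartz_neg_mul hneg h₁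
    have heq : (fun Φ => schMul (R₁ Φ) (R₂ Φ)) = fun Φ => schMul (R₂ Φ) (R₁ Φ) := by
      funext Φ; exact schMul_comm _ _
    rw [heq]
    exact this

end
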